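/- arXiv:math-ph/0101007 — 3 statements merged into one kernel-verified Lean document; each statement's English description precedes it below -/
import Mathlib

section
/- For multi-indices m, n, s in ℕ^N and a unit multi-index μ, C(m,n)·C(n+μ, s) = C(m,s)·C(m-s, m-n) + C(m,n)·C(n, s-μ), where C denotes the multi-dimensional binomial coefficient. -/
/-- Binomial coefficient with integer arguments, with the convention that it
vanishes when the lower index is negative or exceeds the upper index. -/
def zchoose (a b : ℤ) : ℕ := if 0 ≤ b ∧ b ≤ a then a.toNat.choose b.toNat else 0

/-- Multi-dimensional binomial coefficient with integer entries. -/
def multiBinomZ {N : ℕ} (a b : Fin N → ℤ) : ℕ := ∏ i, zchoose (a i) (b i)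

/-- Unit multi-index in direction `μ`. -/
def unitIdx {N : ℕ} (μ : Fin N) : Fin N → ℤ := fun i => if i = μ then 1 else 0

/-!
Both identities hold coordinatewise for integer binomial coefficients that vanish outside
`0 ≤ b ≤ a`, and the multi-index coefficient is a product over coordinates. Pascal's rule in
direction `μ` gives `C(n + μ, s) = C(n, s) + C(n, s - μ)`; multiplying by `C(m, n)` and applying
the trinomial revision `C(m, n) C(n, s) = C(m, s) C(m - s, m - n)` to the first summand gives
the theorem.
-/

theorem zchoose_natCast (a b : ℕ) : zchoose a b = a.choose b := by
  unfold zchoose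
  split_ifs
  · simp
  · rw [Nat.choose_eq_zero_of_lt]
    omega

theorem zchoose_add_one {a : ℤ} (ha : 0 ≤ a) (b : ℤ) :
    zchoose (a + 1) b = zchoose a b + zchoose a (b - 1) := by
  lift a to ℕ using ha
  rcases lt_or_ge b 0 with hb | hb
  · simp only [zchoose]
    split_ifs <;> omega
  lift b to ℕ using hb
  cases b with
  | zero => simp [zchoose]; positivity
  | succ k =>
    rw [show (a : ℤ) + 1 = ((a + 1 : ℕ) : ℤ) by push_cast; ring,
      show ((k + 1 : ℕ) : ℤ) - 1 = k by push_cast; ring,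
      zchoose_natCast, zchoose_natCast, zchoose_natCast, Nat.choose_succ_succ', add_comm]

/-- Trinomial revision; both sides vanish unless `0 ≤ c ≤ b ≤ a`. -/
theorem zchoose_mul_zchoose (a b c : ℤ) :
    zchoose a b * zchoose b c = zchoose a c * zchoose (a - c) (a - b) := by
  by_cases h : 0 ≤ c ∧ c ≤ b ∧ b ≤ a
  · obtain ⟨hc, hcb, hba⟩ := h
    lift b to ℕ using hc.trans hcb
    lift a to ℕ using (hc.trans hcb).trans hba
    lift c to ℕ using hc
    norm_cast at hcb hba
    rw [← Nat.cast_sub (hcb.trans hba), ← Nat.cast_sub hba, zchoose_natCast, zchoose_natCast,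
      zchoose_natCast, zchoose_natCast, Nat.choose_mul hcb,
      Nat.choose_symm_of_eq_add (by omega : a - c = a - b + (b - c))]
  · simp only [zchoose]
    split_ifs <;> omega

theorem multiBinomZ_add_unitIdx {N : ℕ} {a : Fin N → ℤ} (ha : ∀ i, 0 ≤ a i) (b : Fin N → ℤ)
    (μ : Fin N) :
    multiBinomZ (fun i => a i + unitIdx μ i) b =
      multiBinomZ a b + multiBinomZ a (fun i => b i - unitIdx μ i) :=
  (Finset.prod_add_prod_eq (Finset.mem_univ μ) (by simp [unitIdx, zchoose_add_one (ha μ)])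
    (fun j _ hj => by simp [unitIdx, hj]) (fun j _ hj => by simp [unitIdx, hj])).symm

theorem multiBinomZ_mul_multiBinomZ {N : ℕ} (a b c : Fin N → ℤ) :
    multiBinomZ a b * multiBinomZ b c =
      multiBinomZ a c * multiBinomZ (fun i => a i - c i) (fun i => a i - b i) := by
  simp only [multiBinomZ, ← Finset.prod_mul_distrib, zchoose_mul_zchoose]

theorem multiBinom_lemma_L3 {N : ℕ} (m n s : Fin N → ℕ) (μ : Fin N) :
    multiBinomZ (fun i => (m i : ℤ)) (fun i => (n i : ℤ)) *
      multiBinomZ (fun i => (n i : ℤ) + unitIdx μ i) (fun i => (s i : ℤ)) =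
    multiBinomZ (fun i => (m i : ℤ)) (fun i => (s i : ℤ)) *
      multiBinomZ (fun i => (m i : ℤ) - s i) (fun i => (m i : ℤ) - n i) +
    multiBinomZ (fun i => (m i : ℤ)) (fun i => (n i : ℤ)) *
      multiBinomZ (fun i => (n i : ℤ)) (fun i => (s i : ℤ) - unitIdx μ i) := by
  rw [multiBinomZ_add_unitIdx (fun i => Int.natCast_nonneg (n i)), mul_add,
    multiBinomZ_mul_multiBinomZ]
end

section
/- The sum over all multi-indices m ∈ ℕ^N with |m| ≤ p of (m_1+1)(m_2+1) (for N ≥ 2, two distinct fixed coordinates) equals (N+p+2 choose N+2). -/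
/-!
Give coordinate `i` the weight `(a i + m i).choose (a i)`, the number of monomials of degree `m i`
in `a i + 1` variables. Then the weighted count of the `m` with `|m| ≤ p` is
`(|a| + N + p).choose (|a| + N)`: peeling off one coordinate reduces this to the upper Vandermonde
convolution, which is the coefficient identity `(1 - X)⁻⁽ᵃ⁺¹⁾ (1 - X)⁻⁽ᵇ⁺¹⁾ = (1 - X)⁻⁽ᵃ⁺ᵇ⁺²⁾`.
The theorem is the case where `a` is `1` on the two chosen coordinates and `0` elsewhere.
-/

/-- The finset of multi-indices `m : Fin N → ℕ` with `|m| = ∑ i, m i ≤ p`. -/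
def multiIdx (N p : ℕ) : Finset (Fin N → ℕ) :=
  (Fintype.piFinset fun _ : Fin N => Finset.range (p + 1)).filter
    fun m => ∑ i, m i ≤ p

open Finset PowerSeries

theorem Nat.sum_antidiagonal_add_choose_mul_add_choose (a b p : ℕ) :
    ∑ ij ∈ antidiagonal p, (a + ij.1).choose a * (b + ij.2).choose b =
      (a + b + 1 + p).choose (a + b + 1) := by
  have h := congrArg (coeff (R := ℤ) p) (pow_add (PowerSeries.mk 1) (a + 1) (b + 1))
  rw [show a + 1 + (b + 1) = a + b + 1 + 1 by ring, mk_one_pow_eq_mk_choose_add,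
    mk_one_pow_eq_mk_choose_add, mk_one_pow_eq_mk_choose_add, coeff_mul] at h
  simp only [coeff_mk] at h
  exact_mod_cast h.symm

theorem mem_multiIdx {N p : ℕ} {m : Fin N → ℕ} : m ∈ multiIdx N p ↔ ∑ i, m i ≤ p := by
  refine mem_filter.trans ⟨And.right, fun h => ⟨Fintype.mem_piFinset.2 fun i => ?_, h⟩⟩
  exact mem_range_succ_iff.2 ((single_le_sum (fun j _ => Nat.zero_le (m j)) (mem_univ i)).trans h)

theorem sum_multiIdx_succ {M : Type*} [AddCommMonoid M] {N : ℕ} (p : ℕ)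
    (f : (Fin (N + 1) → ℕ) → M) :
    ∑ m ∈ multiIdx (N + 1) p, f m =
      ∑ k ∈ range (p + 1), ∑ m ∈ multiIdx N (p - k), f (Fin.cons k m) := by
  rw [sum_sigma']
  refine sum_nbij' (fun m => ⟨m 0, Fin.tail m⟩) (fun x => Fin.cons x.1 x.2) ?_ ?_ ?_ ?_ ?_
  · intro m hm
    simp only [mem_multiIdx, Fin.sum_univ_succ, mem_sigma, mem_range_succ_iff] at hm ⊢
    exact ⟨by omega, by simp only [Fin.tail]; omega⟩
  · rintro ⟨k, m⟩ hm
    simp only [mem_multiIdx, Fin.sum_cons, mem_sigma, mem_range_succ_iff] at hm ⊢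
    omega
  · intro m _
    exact Fin.cons_self_tail m
  · rintro ⟨k, m⟩ _
    simp
  · intro m _
    rw [Fin.cons_self_tail]

theorem sum_multiIdx_prod_add_choose {N : ℕ} (a : Fin N → ℕ) (p : ℕ) :
    ∑ m ∈ multiIdx N p, ∏ i, (a i + m i).choose (a i) =
      (∑ i, a i + N + p).choose (∑ i, a i + N) := by
  induction N generalizing p with
  | zero => simp [multiIdx]
  | succ N ih =>
    simp only [sum_multiIdx_succ, Fin.prod_univ_succ, Fin.cons_zero, Fin.cons_succ, ← mul_sum, ih]
    rw [← Nat.sum_antidiagonal_eq_sum_range_succ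
      (fun k l => (a 0 + k).choose (a 0) * (∑ i : Fin N, a i.succ + N + l).choose _),
      Nat.sum_antidiagonal_add_choose_mul_add_choose, Fin.sum_univ_succ]
    congr 1 <;> ring

theorem sum_multiIdx_mul_of_ne {N : ℕ} (p : ℕ) {i j : Fin N} (hij : i ≠ j) :
    ∑ m ∈ multiIdx N p, (m i + 1) * (m j + 1) = (N + p + 2).choose (N + 2) := by
  let a : Fin N → ℕ := fun k => if k = i ∨ k = j then 1 else 0
  have ha_off : ∀ k, k ≠ i ∧ k ≠ j → a k = 0 := fun k hk => by simp [a, hk.1, hk.2]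
  have ha_sum : ∑ k, a k = 2 := by
    simp [Fintype.sum_eq_add i j hij ha_off, a]
  have ha_prod (m : Fin N → ℕ) : ∏ k, (a k + m k).choose (a k) = (m i + 1) * (m j + 1) := by
    rw [Fintype.prod_eq_mul i j hij fun k hk => by simp [ha_off k hk]]
    simp [a, add_comm]
  simpa only [ha_prod, ha_sum, add_comm 2, add_right_comm N 2 p] using
    sum_multiIdx_prod_add_choose a p

theorem sum_multiIdx_two_coords {N p : ℕ} (hN : 2 ≤ N) :
    ∑ m ∈ multiIdx N p, (m ⟨0, by omega⟩ + 1) * (m ⟨1, by omega⟩ + 1) =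
      (N + p + 2).choose (N + 2) :=
  sum_multiIdx_mul_of_ne p (by simp)
end

section
/- For all r, p, N ∈ ℕ with r ≤ p, the alternating sum Σ_{i=0}^{r} (-1)^i (r choose i) (N+p-i choose N) equals (N+p-r choose N-r). -/
/-!
The alternating sum is the `r`-th backward difference of `j ↦ (j choose N)` at `N + p`, i.e. the
`r`-th forward difference at `N + p - r`. By Pascal's rule the forward difference lowers the lower
index of a binomial coefficient by one, until `(j choose 0) = 1` is annihilated.
-/

open Finset Function fwdDiff

theorem fwdDiff_iter_choose_apply (r k x : ℕ) :
    (Δ_[1])^[r] (fun j ↦ j.choose k : ℕ → ℤ) x = if r ≤ k then (x.choose (k - r) : ℤ) else 0 := by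
  split_ifs with hrk
  · obtain ⟨j, rfl⟩ := Nat.exists_eq_add_of_le hrk
    rw [fwdDiff_iter_choose, Nat.add_sub_cancel_left]
  · obtain ⟨s, rfl⟩ := Nat.exists_eq_add_of_lt (not_le.mp hrk)
    have hconst : (Δ_[1])^[k] (fun j ↦ j.choose k : ℕ → ℤ) = fun _ ↦ 1 := by
      simpa using fwdDiff_iter_choose 0 k
    have hzero : (Δ_[1])^[s] (fun _ ↦ 0 : ℕ → ℤ) = fun _ ↦ 0 :=
      iterate_fixed (fwdDiff_const 1 0) s
    rw [add_assoc, add_comm k, iterate_add_apply, iterate_add_apply, hconst, iterate_one,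
      fwdDiff_const, hzero]

theorem sum_range_alternating_choose_smul_sub {G : Type*} [AddCommGroup G] (f : ℕ → G)
    {r m : ℕ} (hrm : r ≤ m) :
    ∑ i ∈ range (r + 1), ((-1 : ℤ) ^ i * r.choose i) • f (m - i) = (Δ_[1])^[r] f (m - r) := by
  rw [fwdDiff_iter_eq_sum_shift, ← sum_range_reflect]
  refine sum_congr rfl fun i hi ↦ ?_
  have hir : i ≤ r := Nat.lt_succ_iff.mp (mem_range.mp hi)
  rw [Nat.add_sub_cancel, Nat.choose_symm hir, smul_eq_mul, mul_one]
  congr 2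
  omega

theorem sum_range_alternating_choose_mul_choose_sub {r m : ℕ} (k : ℕ) (hrm : r ≤ m) :
    ∑ i ∈ range (r + 1), (-1 : ℤ) ^ i * (r.choose i : ℤ) * ((m - i).choose k : ℤ) =
      if r ≤ k then ((m - r).choose (k - r) : ℤ) else 0 := by
  simpa only [smul_eq_mul, fwdDiff_iter_choose_apply] using
    sum_range_alternating_choose_smul_sub (fun j ↦ (j.choose k : ℤ)) hrm

theorem alternating_binomial_sum (r p N : ℕ) (hrp : r ≤ p) :
    ∑ i ∈ Finset.range (r + 1),
        (-1 : ℤ) ^ i * (r.choose i : ℤ) * ((N + p - i).choose N : ℤ) =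
      if r ≤ N then ((N + p - r).choose (N - r) : ℤ) else 0 :=
  sum_range_alternating_choose_mul_choose_sub N (hrp.trans (Nat.le_add_left p N))
end
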